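/- arXiv:2103.04730 — 3 statements merged into one kernel-verified Lean document; each statement's English description precedes it below -/
import Mathlib

section
/- (Index Decay.) Under the natural constraints, let 0 < β ≤ 1, 0 ≤ b ≤ 1, and T ≥ 2. Assume indexability in the form: the map m ↦ Vp m T b − Va m T b is monotone nondecreasing. If m_T is a real number satisfying Vp m_T T b = Va m_T T b (that is, m_T is the Whittle index of belief b for horizon T), then m_T > m₁(b) > 0, where m₁(b) is the Whittle index for horizon 1. -/
/-!
Every finite-horizon value function `V t` is convex in the belief and, for `t ≥ 1`, grows with
slope strictly greater than one. Take the subsidy `m₁ = β (ρₐ - ρₚ)`, where `ρₚ`, `ρₐ` are the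
beliefs reached from `b` under the passive and the active action. With at least two steps left,
convexity bounds the active continuation from below by `β V(ρₐ)`, and the slope bound gives
`β V(ρₐ) > β V(ρₚ) + m₁`, the passive continuation plus subsidy. So passivity is strictly worse
at `m₁`, and by indexability the indifference subsidy `m_T` must exceed `m₁`.
-/

noncomputable def V (β m p01p p11p p01a p11a : ℝ) : ℕ → ℝ → ℝ
  | 0, b => b
  | T + 1, b =>
      max (b + m + β * V β m p01p p11p p01a p11a T (b * p11p + (1 - b) * p01p))
          (b + β * (b * V β m p01p p11p p01a p11a T p11a
                    + (1 - b) * V β m p01p p11p p01a p11a T p01a))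

noncomputable def Vp (β m p01p p11p p01a p11a : ℝ) (T : ℕ) (b : ℝ) : ℝ :=
  b + m + β * V β m p01p p11p p01a p11a (T - 1) (b * p11p + (1 - b) * p01p)

noncomputable def Va (β m p01p p11p p01a p11a : ℝ) (T : ℕ) (b : ℝ) : ℝ :=
  b + β * (b * V β m p01p p11p p01a p11a (T - 1) p11a
           + (1 - b) * V β m p01p p11p p01a p11a (T - 1) p01a)

open Set

noncomputable def myopicIndex (β p01p p11p p01a p11a b : ℝ) : ℝ :=
  β * ((b * p11a + (1 - b) * p01a) - (b * p11p + (1 - b) * p01p))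

lemma passive_belief_lt_active_belief {p01p p11p p01a p11a b : ℝ} (hb0 : 0 ≤ b) (hb1 : b ≤ 1)
    (h01 : p01p < p01a) (h11 : p11p < p11a) :
    b * p11p + (1 - b) * p01p < b * p11a + (1 - b) * p01a := by
  rcases hb0.eq_or_lt with rfl | hb
  · simpa using h01
  · nlinarith [mul_lt_mul_of_pos_left h11 hb, mul_le_mul_of_nonneg_left h01.le (sub_nonneg.2 hb1)]

section
variable {β m p01p p11p p01a p11a : ℝ}

lemma V_succ_sub_self (t : ℕ) (x : ℝ) :
    V β m p01p p11p p01a p11a (t + 1) x - x =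
      max (m + β * V β m p01p p11p p01a p11a t (x * p11p + (1 - x) * p01p))
        (β * (x * V β m p01p p11p p01a p11a t p11a
          + (1 - x) * V β m p01p p11p p01a p11a t p01a)) := by
  rw [V, ← max_sub_sub_right]
  congr 1 <;> ring

lemma monotone_V_sub_self (hβ : 0 ≤ β) (hp : p01p ≤ p11p) (ha : p01a ≤ p11a) (t : ℕ) :
    Monotone fun x => V β m p01p p11p p01a p11a t x - x := by
  induction t with
  | zero => intro x y _; simp [V]
  | succ t ih =>
    intro x y hxy
    have hρ : x * p11p + (1 - x) * p01p ≤ y * p11p + (1 - y) * p01p := by nlinarith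
    have hVρ := ih hρ
    have hVa := ih ha
    simp only [V_succ_sub_self] at hVρ hVa ⊢
    have hgap : 0 ≤ V β m p01p p11p p01a p11a t p11a - V β m p01p p11p p01a p11a t p01a := by
      linarith
    apply max_le_max
    · nlinarith
    · nlinarith [mul_nonneg hβ (mul_nonneg (sub_nonneg.2 hxy) hgap)]

lemma strictMono_V_succ_sub_self (hβ : 0 < β) (hp : p01p < p11p) (ha : p01a < p11a) (t : ℕ) :
    StrictMono fun x => V β m p01p p11p p01a p11a (t + 1) x - x := by
  intro x y hxy
  have hρ : x * p11p + (1 - x) * p01p < y * p11p + (1 - y) * p01p := by nlinarith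
  have hVρ := monotone_V_sub_self (m := m) hβ.le hp.le ha.le t hρ.le
  have hVa := monotone_V_sub_self (m := m) hβ.le hp.le ha.le t ha.le
  simp only [V_succ_sub_self] at hVρ hVa ⊢
  have hgap : 0 < V β m p01p p11p p01a p11a t p11a - V β m p01p p11p p01a p11a t p01a := by
    linarith
  apply max_lt_max
  · nlinarith
  · nlinarith [mul_pos hβ (mul_pos (sub_pos.2 hxy) hgap)]

lemma convexOn_V (hβ : 0 ≤ β) (t : ℕ) : ConvexOn ℝ univ (V β m p01p p11p p01a p11a t) := by
  induction t with
  | zero => exact convexOn_id convex_univ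
  | succ t ih =>
    refine ConvexOn.sup (f := fun x =>
      x + m + β * V β m p01p p11p p01a p11a t (x * p11p + (1 - x) * p01p)) ?_ ?_
    · refine ⟨convex_univ, fun x _ y _ a c ha hc hac => ?_⟩
      obtain rfl : c = 1 - a := by linarith
      have hV := ih.2 (mem_univ (x * p11p + (1 - x) * p01p)) (mem_univ (y * p11p + (1 - y) * p01p))
        ha hc hac
      simp only [smul_eq_mul] at hV ⊢
      have hρ : (a * x + (1 - a) * y) * p11p + (1 - (a * x + (1 - a) * y)) * p01p
          = a * (x * p11p + (1 - x) * p01p) + (1 - a) * (y * p11p + (1 - y) * p01p) := by ring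
      rw [hρ]
      nlinarith [mul_le_mul_of_nonneg_left hV hβ]
    · refine ⟨convex_univ, fun x _ y _ a c _ _ hac => le_of_eq ?_⟩
      obtain rfl : c = 1 - a := by linarith
      simp only [smul_eq_mul]
      ring

lemma Vp_myopicIndex_lt_Va (hβ : 0 < β) (hp : p01p < p11p) (ha : p01a < p11a)
    {b : ℝ} (hb0 : 0 ≤ b) (hb1 : b ≤ 1)
    (hρ : b * p11p + (1 - b) * p01p < b * p11a + (1 - b) * p01a) (t : ℕ) :
    Vp β (myopicIndex β p01p p11p p01a p11a b) p01p p11p p01a p11a (t + 2) b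
      < Va β (myopicIndex β p01p p11p p01a p11a b) p01p p11p p01a p11a (t + 2) b := by
  set m₁ := myopicIndex β p01p p11p p01a p11a b
  have hm₁ : m₁ = β * ((b * p11a + (1 - b) * p01a) - (b * p11p + (1 - b) * p01p)) := rfl
  have hslope : V β m₁ p01p p11p p01a p11a (t + 1) (b * p11p + (1 - b) * p01p)
      - (b * p11p + (1 - b) * p01p)
      < V β m₁ p01p p11p p01a p11a (t + 1) (b * p11a + (1 - b) * p01a)
      - (b * p11a + (1 - b) * p01a) :=
    strictMono_V_succ_sub_self hβ hp ha t hρ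
  have hconv : V β m₁ p01p p11p p01a p11a (t + 1) (b * p11a + (1 - b) * p01a)
      ≤ b * V β m₁ p01p p11p p01a p11a (t + 1) p11a
        + (1 - b) * V β m₁ p01p p11p p01a p11a (t + 1) p01a := by
    simpa only [smul_eq_mul] using (convexOn_V hβ.le (t + 1)).2
      (mem_univ p11a) (mem_univ p01a) hb0 (sub_nonneg.2 hb1) (add_sub_cancel b 1)
  rw [Vp, Va, show t + 2 - 1 = t + 1 from rfl]
  linarith [mul_lt_mul_of_pos_left hslope hβ, mul_le_mul_of_nonneg_left hconv hβ.le]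

end

theorem index_decay_general
    (p01p p11p p01a p11a β b : ℝ) (T : ℕ) (mT : ℝ)
    (h2 : p01p < p11p)
    (h5 : p01a < p11a)
    (h7 : p01a > p01p) (h8 : p11a > p11p)
    (hβ0 : 0 < β) (hb0 : 0 ≤ b) (hb1 : b ≤ 1) (hT : 2 ≤ T)
    (hindex : Monotone (fun m : ℝ =>
      Vp β m p01p p11p p01a p11a T b - Va β m p01p p11p p01a p11a T b))
    (hmT : Vp β mT p01p p11p p01a p11a T b = Va β mT p01p p11p p01a p11a T b) :
    mT > β * ((b * p11a + (1 - b) * p01a) - (b * p11p + (1 - b) * p01p)) ∧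
    β * ((b * p11a + (1 - b) * p01a) - (b * p11p + (1 - b) * p01p)) > 0 := by
  have hρ := passive_belief_lt_active_belief hb0 hb1 h7 h8
  have hm₁ : 0 < myopicIndex β p01p p11p p01a p11a b := mul_pos hβ0 (sub_pos.2 hρ)
  obtain ⟨t, rfl⟩ : ∃ t, T = t + 2 := ⟨T - 2, by omega⟩
  have hlt := Vp_myopicIndex_lt_Va hβ0 h2 h5 hb0 hb1 hρ t
  refine ⟨lt_of_not_ge fun (hle : mT ≤ myopicIndex β p01p p11p p01a p11a b) => ?_, hm₁⟩
  have := hindex hle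
  simp only [hmT, sub_self] at this
  linarith

theorem index_decay
    (p01p p11p p01a p11a β b : ℝ) (T : ℕ) (mT : ℝ)
    (h1 : 0 ≤ p01p) (h2 : p01p < p11p) (h3 : p11p ≤ 1)
    (h4 : 0 ≤ p01a) (h5 : p01a < p11a) (h6 : p11a ≤ 1)
    (h7 : p01a > p01p) (h8 : p11a > p11p)
    (hβ0 : 0 < β) (hβ1 : β ≤ 1) (hb0 : 0 ≤ b) (hb1 : b ≤ 1) (hT : 2 ≤ T)
    (hindex : Monotone (fun m : ℝ =>
      Vp β m p01p p11p p01a p11a T b - Va β m p01p p11p p01a p11a T b))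
    (hmT : Vp β mT p01p p11p p01a p11a T b = Va β mT p01p p11p p01a p11a T b) :
    mT > β * ((b * p11a + (1 - b) * p01a) - (b * p11p + (1 - b) * p01p)) ∧
    β * ((b * p11a + (1 - b) * p01a) - (b * p11p + (1 - b) * p01p)) > 0 :=
  index_decay_general p01p p11p p01a p11a β b T mT h2 h5 h7 h8 hβ0 hb0 hb1 hT hindex hmT
end

section
/- If β ≥ 0, then for every m and every horizon T ∈ ℕ, the map b ↦ V m T b is convex on ℝ. -/
/-! Induction on the horizon. The passive branch `Vp` is the convex `V (T - 1)` composed with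
the affine belief update, plus an affine term; since `β ≥ 0` it is convex. The active branch `Va`
is affine in `b`, and `V T` is the maximum of the two. -/

open Set
open AffineMap (lineMap lineMap_apply_ring)

theorem AffineMap.convexOn {𝕜 E β : Type*} [Ring 𝕜] [PartialOrder 𝕜]
    [AddCommGroup E] [Module 𝕜 E] [AddCommGroup β] [PartialOrder β] [Module 𝕜 β]
    (f : E →ᵃ[𝕜] β) {s : Set E} (hs : Convex 𝕜 s) : ConvexOn 𝕜 s f :=
  ⟨hs, fun _ _ _ _ _ _ _ _ hab => (Convex.combo_affine_apply hab).le⟩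

section ValueFunction

variable {β m p01p p11p p01a p11a : ℝ}

theorem V_succ_eq_max (T : ℕ) (b : ℝ) :
    V β m p01p p11p p01a p11a (T + 1) b =
      max (Vp β m p01p p11p p01a p11a (T + 1) b) (Va β m p01p p11p p01a p11a (T + 1) b) :=
  rfl

theorem Va_succ_eq_lineMap (T : ℕ) :
    Va β m p01p p11p p01a p11a (T + 1) =
      lineMap (β * V β m p01p p11p p01a p11a T p01a)
        (1 + β * V β m p01p p11p p01a p11a T p11a) := by
  funext b
  simp only [Va, lineMap_apply_ring, add_tsub_cancel_right]
  ring

theorem convexOn_Va_succ (T : ℕ) : ConvexOn ℝ univ (Va β m p01p p11p p01a p11a (T + 1)) := by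
  rw [Va_succ_eq_lineMap]
  exact AffineMap.convexOn _ convex_univ

theorem convexOn_Vp_succ (hβ : 0 ≤ β) {T : ℕ}
    (hV : ConvexOn ℝ univ (V β m p01p p11p p01a p11a T)) :
    ConvexOn ℝ univ (Vp β m p01p p11p p01a p11a (T + 1)) := by
  have hV_belief : ConvexOn ℝ univ
      (fun b : ℝ => V β m p01p p11p p01a p11a T (lineMap p01p p11p b)) :=
    (hV.comp_affineMap (lineMap p01p p11p)).subset (subset_univ _) convex_univ
  refine (((convexOn_id convex_univ).add_const m).add (hV_belief.smul hβ)).congr fun b _ => ?_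
  simp only [Vp, Pi.add_apply, id_eq, smul_eq_mul, lineMap_apply_ring, add_tsub_cancel_right,
    add_comm ((1 - b) * p01p)]

end ValueFunction

theorem value_function_convex_in_belief
    (p01p p11p p01a p11a β : ℝ) (hβ : 0 ≤ β) :
    ∀ (m : ℝ) (T : ℕ),
      ConvexOn ℝ Set.univ (fun b : ℝ => V β m p01p p11p p01a p11a T b) := by
  intro m T
  induction T with
  | zero => exact convexOn_id convex_univ
  | succ T ih =>
    simp only [V_succ_eq_max]
    exact (convexOn_Vp_succ hβ ih).sup (convexOn_Va_succ T)
end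

section
/- Suppose β ≥ 0 and P01p, P11p, P01a, P11a ∈ [0,1]. Then for every horizon T ∈ ℕ and every b ∈ [0,1], the map m ↦ V m T b is monotone nondecreasing and convex on ℝ. -/
open Set

structure IsMaxCone (P : (ℝ → ℝ) → Prop) : Prop where
  const (c : ℝ) : P fun _ => c
  id : P fun m => m
  add {f g : ℝ → ℝ} : P f → P g → P fun m => f m + g m
  smul {f : ℝ → ℝ} {c : ℝ} : 0 ≤ c → P f → P fun m => c * f m
  max {f g : ℝ → ℝ} : P f → P g → P fun m => max (f m) (g m)

theorem isMaxCone_monotone : IsMaxCone Monotone where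
  const _ := monotone_const
  id := monotone_id
  add hf hg := hf.add hg
  smul hc hf := hf.const_mul hc
  max hf hg := hf.max hg

theorem isMaxCone_convexOn : IsMaxCone (ConvexOn ℝ univ) where
  const c := convexOn_const c convex_univ
  id := convexOn_id convex_univ
  add hf hg := hf.add hg
  smul hc hf := hf.smul hc
  max hf hg := hf.sup hg

theorem convex_combination_mem_unitInterval {b p q : ℝ} (hb : b ∈ Icc (0 : ℝ) 1)
    (hp : p ∈ Icc (0 : ℝ) 1) (hq : q ∈ Icc (0 : ℝ) 1) : b * p + (1 - b) * q ∈ Icc (0 : ℝ) 1 :=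
  convex_Icc 0 1 hp hq hb.1 (sub_nonneg.2 hb.2) (add_sub_cancel b 1)

section

variable {β p01p p11p p01a p11a : ℝ}

theorem V_succ (m : ℝ) (T : ℕ) (b : ℝ) :
    V β m p01p p11p p01a p11a (T + 1) b =
      max (Vp β m p01p p11p p01a p11a (T + 1) b) (Va β m p01p p11p p01a p11a (T + 1) b) :=
  rfl

theorem IsMaxCone.V {P : (ℝ → ℝ) → Prop} (hP : IsMaxCone P) (hβ : 0 ≤ β)
    (hp01p : p01p ∈ Icc (0 : ℝ) 1) (hp11p : p11p ∈ Icc (0 : ℝ) 1)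
    (hp01a : p01a ∈ Icc (0 : ℝ) 1) (hp11a : p11a ∈ Icc (0 : ℝ) 1) (T : ℕ) :
    ∀ b ∈ Icc (0 : ℝ) 1, P fun m => V β m p01p p11p p01a p11a T b := by
  induction T with
  | zero => exact fun b _ => hP.const b
  | succ T ih =>
    intro b hb
    have hVp : P fun m => Vp β m p01p p11p p01a p11a (T + 1) b :=
      hP.add (hP.add (hP.const b) hP.id)
        (hP.smul hβ (ih _ (convex_combination_mem_unitInterval hb hp11p hp01p)))
    have hVa : P fun m => Va β m p01p p11p p01a p11a (T + 1) b :=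
      hP.add (hP.const b) (hP.smul hβ (hP.add (hP.smul hb.1 (ih p11a hp11a))
        (hP.smul (sub_nonneg.2 hb.2) (ih p01a hp01a))))
    simpa only [V_succ] using hP.max hVp hVa

end

theorem value_function_monotone_convex_in_subsidy
    (p01p p11p p01a p11a β : ℝ) (hβ : 0 ≤ β)
    (h1 : 0 ≤ p01p) (h1' : p01p ≤ 1) (h2 : 0 ≤ p11p) (h2' : p11p ≤ 1)
    (h3 : 0 ≤ p01a) (h3' : p01a ≤ 1) (h4 : 0 ≤ p11a) (h4' : p11a ≤ 1) :
    ∀ (T : ℕ) (b : ℝ), 0 ≤ b → b ≤ 1 →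
      Monotone (fun m : ℝ => V β m p01p p11p p01a p11a T b) ∧
      ConvexOn ℝ Set.univ (fun m : ℝ => V β m p01p p11p p01a p11a T b) := by
  intro T b hb hb1
  exact ⟨isMaxCone_monotone.V hβ ⟨h1, h1'⟩ ⟨h2, h2'⟩ ⟨h3, h3'⟩ ⟨h4, h4'⟩ T b ⟨hb, hb1⟩,
    isMaxCone_convexOn.V hβ ⟨h1, h1'⟩ ⟨h2, h2'⟩ ⟨h3, h3'⟩ ⟨h4, h4'⟩ T b ⟨hb, hb1⟩⟩
end
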